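/- arXiv:2104.10544 — 8 statements merged into one kernel-verified Lean document; each statement's English description precedes it below -/
import Mathlib

section
/- For any integers s' ≥ 0, p ≥ 1, c ≥ 0, and precision r ≥ 0 with c + p ≤ 2^r, if s = 2^r · (s' div p) + (s' mod p) + c, then p · (s div 2^r) + (s mod 2^r) − c = s'. -/
/-- ANS encode/decode bijection on the integer state: decoding recovers `s'`
from `s = 2^r * (s' / p) + s' % p + c`, given `1 ≤ p` and `c + p ≤ 2^r`. -/
theorem stmt0 (s' p c r : ℕ) (hp : 1 ≤ p) (hc : c + p ≤ 2 ^ r) :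
    p * ((2 ^ r * (s' / p) + s' % p + c) / 2 ^ r)
      + (2 ^ r * (s' / p) + s' % p + c) % 2 ^ r - c = s' := by
  have hlt : s' % p + c < 2 ^ r := by
    have := Nat.mod_lt s' hp
    omega
  rw [add_assoc, Nat.mul_add_div (by positivity), Nat.mul_add_mod,
    Nat.div_eq_of_lt hlt, Nat.mod_eq_of_lt hlt]
  rw [add_zero, ← add_assoc, Nat.add_sub_cancel, Nat.div_add_mod]
end

section
/- Let r, r_s, r_t be natural numbers with r + r_t < r_s. Suppose s ≥ 2^(r_s − r_t), 1 ≤ p ≤ 2^r, and s' = p · (s div 2^r) + (s mod 2^r) − c where 0 ≤ c ≤ s mod 2^r. Then log₂ s' ≥ log₂ s − log₂(2^r / p) − ε, where ε = log₂(1 / (1 − 2^(−(r_s − r_t − r)))). -/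
/-- Per-symbol length guarantee of the ANS decode step:
`log₂ s' ≥ log₂ s − log₂(2^r / p) − ε` with
`ε = log₂(1 / (1 − 2^{−(r_s − r_t − r)}))`. -/
theorem stmt1 (r r_s r_t s s' p c : ℕ)
    (hr : r + r_t < r_s)
    (hs : 2 ^ (r_s - r_t) ≤ s)
    (hp : 1 ≤ p) (hp2 : p ≤ 2 ^ r)
    (hc : c ≤ s % 2 ^ r)
    (hs' : s' = p * (s / 2 ^ r) + s % 2 ^ r - c) :
    Real.logb 2 s' ≥
      Real.logb 2 s - Real.logb 2 ((2 : ℝ) ^ r / p)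
        - Real.logb 2 (1 / (1 - ((2 : ℝ) ^ (r_s - r_t - r))⁻¹)) := by
  set k := r_s - r_t - r with hk_def
  have hk : 1 ≤ k := by omega
  have hrk : r_s - r_t = r + k := by omega
  have hs0 : 0 < s := lt_of_lt_of_le (Nat.pow_pos (by norm_num)) hs
  have hsR : (0:ℝ) < (s:ℝ) := by exact_mod_cast hs0
  have hpR : (1:ℝ) ≤ (p:ℝ) := by exact_mod_cast hp
  have hpR0 : (0:ℝ) < (p:ℝ) := lt_of_lt_of_le one_pos hpR
  have h2r : (0:ℝ) < 2 ^ r := by positivity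
  have hek : (1:ℝ) < 2 ^ k := by
    calc (1:ℝ) < 2 := one_lt_two
    _ ≤ 2 ^ k := le_self_pow₀ (by norm_num) (by omega)
  have hfrac : (0:ℝ) < 1 - ((2:ℝ) ^ k)⁻¹ := by
    have : ((2:ℝ) ^ k)⁻¹ < 1 := inv_lt_one_of_one_lt₀ hek
    linarith
  -- key inequality on reals
  have hmod : ((s % 2 ^ r : ℕ) : ℝ) ≤ (s:ℝ) * ((2:ℝ)^k)⁻¹ := by
    have h1 : (s % 2 ^ r : ℕ) < 2 ^ r := Nat.mod_lt _ (Nat.pow_pos (by norm_num))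
    have h1R : ((s % 2 ^ r : ℕ) : ℝ) ≤ (2:ℝ)^r := by exact_mod_cast h1.le
    have hsk : (2:ℝ)^(r+k) ≤ (s:ℝ) := by
      rw [← hrk]; exact_mod_cast hs
    have h2 : (2:ℝ)^r ≤ (s:ℝ) * ((2:ℝ)^k)⁻¹ := by
      have : (2:ℝ)^r = (2:ℝ)^(r+k) * ((2:ℝ)^k)⁻¹ := by
        rw [pow_add]; field_simp
      rw [this]
      exact mul_le_mul_of_nonneg_right hsk (by positivity)
    exact h1R.trans h2
  have hdiv : ((s / 2 ^ r : ℕ) : ℝ) = ((s:ℝ) - ((s % 2 ^ r : ℕ):ℝ)) / 2 ^ r := by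
    have := Nat.div_add_mod s (2 ^ r)
    have h : ((2 ^ r * (s / 2 ^ r) + s % 2 ^ r : ℕ) : ℝ) = (s:ℝ) := by exact_mod_cast congrArg Nat.cast this
    push_cast at h ⊢
    field_simp
    linarith
  have hlow : (s:ℝ) * p * (1 - ((2:ℝ)^k)⁻¹) / 2 ^ r ≤ (s':ℝ) := by
    have h1 : (p * (s / 2 ^ r) : ℕ) ≤ s' := by omega
    have h1R : ((p:ℝ)) * ((s / 2 ^ r : ℕ):ℝ) ≤ (s':ℝ) := by exact_mod_cast h1
    have h2 : (s:ℝ) * (1 - ((2:ℝ)^k)⁻¹) ≤ (s:ℝ) - ((s % 2 ^ r : ℕ):ℝ) := by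
      nlinarith [hmod]
    calc (s:ℝ) * p * (1 - ((2:ℝ)^k)⁻¹) / 2 ^ r
        ≤ (p:ℝ) * (((s:ℝ) - ((s % 2 ^ r : ℕ):ℝ)) / 2 ^ r) := by
          rw [div_le_iff₀ h2r]
          have : (p:ℝ) * (((s:ℝ) - ((s % 2 ^ r : ℕ):ℝ)) / 2 ^ r) * 2 ^ r
              = (p:ℝ) * ((s:ℝ) - ((s % 2 ^ r : ℕ):ℝ)) := by field_simp
          rw [this]
          nlinarith [h2, hpR0]
      _ = (p:ℝ) * ((s / 2 ^ r : ℕ):ℝ) := by rw [hdiv]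
      _ ≤ (s':ℝ) := h1R
  have harg : (0:ℝ) < (s:ℝ) * p * (1 - ((2:ℝ)^k)⁻¹) / 2 ^ r := by positivity
  have hlog : Real.logb 2 ((s:ℝ) * p * (1 - ((2:ℝ)^k)⁻¹) / 2 ^ r) ≤ Real.logb 2 s' :=
    Real.logb_le_logb_of_le (by norm_num) harg hlow
  have heq : Real.logb 2 ((s:ℝ) * p * (1 - ((2:ℝ)^k)⁻¹) / 2 ^ r)
      = Real.logb 2 s - Real.logb 2 ((2 : ℝ) ^ r / p)
        - Real.logb 2 (1 / (1 - ((2:ℝ)^k)⁻¹)) := by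
    rw [Real.logb_div (by positivity) (ne_of_gt h2r),
        Real.logb_mul (by positivity) (ne_of_gt hfrac),
        Real.logb_mul (ne_of_gt hsR) (ne_of_gt hpR0),
        Real.logb_div (ne_of_gt h2r) (ne_of_gt hpR0),
        Real.logb_div (by norm_num) (ne_of_gt hfrac), Real.logb_one]
    ring
  rw [ge_iff_le, ← heq]
  exact hlog
end

section
/- If s' ≥ p·2^(r_s − r_t − r) (with p ≥ 1, r + r_t ≤ r_s), then p · (s' div 2^r) ≥ 2^(r_s − r_t); and if s' < p·2^(r_s − r), then 2^r · (s' div p) + (s' mod p) + c < 2^(r_s) whenever c + p ≤ 2^r. Hence the renormalization condition p·2^(r_s − r_t − r) ≤ s' < p·2^(r_s − r) is equivalent to 2^(r_s − r_t) ≤ d⁻¹(s') < 2^(r_s), where d⁻¹(s') = 2^r·(s' div p) + s' mod p + c. -/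
/-- The renormalization condition `p·2^(r_s−r_t−r) ≤ s' < p·2^(r_s−r)` is
equivalent to `2^(r_s−r_t) ≤ d⁻¹(s') < 2^(r_s)`, where
`d⁻¹(s') = 2^r·(s' div p) + s' mod p + c`. -/
theorem stmt2 (r r_s r_t s' p c : ℕ) (hp : 1 ≤ p) (hr : r + r_t ≤ r_s)
    (hc : c + p ≤ 2 ^ r) :
    (p * 2 ^ (r_s - r_t - r) ≤ s' → 2 ^ (r_s - r_t) ≤ 2 ^ r * (s' / p)) ∧
    (s' < p * 2 ^ (r_s - r) → 2 ^ r * (s' / p) + s' % p + c < 2 ^ r_s) ∧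
    ((p * 2 ^ (r_s - r_t - r) ≤ s' ∧ s' < p * 2 ^ (r_s - r)) ↔
      (2 ^ (r_s - r_t) ≤ 2 ^ r * (s' / p) + s' % p + c ∧
        2 ^ r * (s' / p) + s' % p + c < 2 ^ r_s)) := by
  have hp' : 0 < p := hp
  have e1 : 2 ^ (r_s - r_t) = 2 ^ r * 2 ^ (r_s - r_t - r) := by
    rw [← pow_add]; congr 1; omega
  have e2 : 2 ^ r_s = 2 ^ r * 2 ^ (r_s - r) := by
    rw [← pow_add]; congr 1; omega
  have hmod : s' % p < p := Nat.mod_lt _ hp'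
  have A : p * 2 ^ (r_s - r_t - r) ≤ s' → 2 ^ (r_s - r_t) ≤ 2 ^ r * (s' / p) := by
    intro h
    rw [e1]
    refine Nat.mul_le_mul_left _ ?_
    rw [Nat.le_div_iff_mul_le hp', mul_comm]
    exact h
  have B : s' < p * 2 ^ (r_s - r) → 2 ^ r * (s' / p) + s' % p + c < 2 ^ r_s := by
    intro h
    have hdiv : s' / p < 2 ^ (r_s - r) := Nat.div_lt_of_lt_mul h
    have h2 : 2 ^ r * (s' / p + 1) ≤ 2 ^ r * 2 ^ (r_s - r) :=
      Nat.mul_le_mul_left _ hdiv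
    rw [Nat.mul_add, Nat.mul_one] at h2
    omega
  refine ⟨A, B, ?_, ?_⟩
  · rintro ⟨h1, h2⟩
    exact ⟨le_trans (A h1) (by omega), B h2⟩
  · rintro ⟨h1, h2⟩
    constructor
    · by_contra hn
      push_neg at hn
      have hdiv : s' / p < 2 ^ (r_s - r_t - r) := Nat.div_lt_of_lt_mul hn
      have h2 : 2 ^ r * (s' / p + 1) ≤ 2 ^ r * 2 ^ (r_s - r_t - r) :=
        Nat.mul_le_mul_left _ hdiv
      rw [Nat.mul_add, Nat.mul_one] at h2
      omega
    · by_contra hn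
      push_neg at hn
      have hdiv : 2 ^ (r_s - r) ≤ s' / p := by
        rw [Nat.le_div_iff_mul_le hp', mul_comm]; exact hn
      have h3 : 2 ^ r * 2 ^ (r_s - r) ≤ 2 ^ r * (s' / p) :=
        Nat.mul_le_mul_left _ hdiv
      omega
end

section
/- Let s' be a natural number with s' ≥ 2^(r_s − r_t) · p / 2^r for some p ≥ 1 and r_t ≥ 1. Repeatedly replacing s' by s' div 2^(r_t) (i.e., iterating the renormalization loop), the condition p·2^(r_s − r_t − r) ≤ s' < p·2^(r_s − r) is satisfied at most once along the iteration; i.e., if s' satisfies the condition then s' div 2^(r_t) does not. -/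
/-- The ANS inverse-renormalization interval is hit at most once along the
orbit `s' ↦ s' div 2^(r_t)`: if `s'` satisfies the renormalization condition
then `s' div 2^(r_t)` does not. -/
theorem stmt3 (p r r_s r_t s' : ℕ) (hp : 1 ≤ p) (ht : 1 ≤ r_t)
    (hr : r + r_t ≤ r_s)
    (h1 : p * 2 ^ (r_s - r_t - r) ≤ s') (h2 : s' < p * 2 ^ (r_s - r)) :
    ¬(p * 2 ^ (r_s - r_t - r) ≤ s' / 2 ^ r_t ∧
        s' / 2 ^ r_t < p * 2 ^ (r_s - r)) := by
  rintro ⟨ha, -⟩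
  rw [Nat.le_div_iff_mul_le (by positivity)] at ha
  have he : r_s - r_t - r + r_t = r_s - r := by omega
  rw [mul_assoc, ← pow_add, he] at ha
  omega
end

section
/- With the setup of the ANS symbol map: for each symbol i, the function s ↦ p_i · (s div 2^r) + (s mod 2^r) − c_i restricted to {s ∈ ℕ : d̃(s) = i} is a bijection onto ℕ; equivalently, s ↦ (d̃(s), p_{d̃(s)}·(s div 2^r) + s mod 2^r − c_{d̃(s)}) is a bijection from ℕ to ℕ × {1,...,I}. -/
/-- The ANS map `s ↦ (d̃(s), s')` with
`s' = p_{d̃(s)}·(s div 2^r) + s mod 2^r − c_{d̃(s)}` is a bijection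
`ℕ → ℕ × {1,…,I}` (here `Fin I × ℕ`). -/
theorem stmt5 (I r : ℕ) (p : Fin I → ℕ) (hp : ∀ i, 1 ≤ p i)
    (hsum : ∑ i, p i = 2 ^ r)
    (c : Fin I → ℕ) (hc : ∀ i, c i = ∑ j ∈ Finset.Iio i, p j)
    (dt : ℕ → Fin I)
    (hdt : ∀ s, c (dt s) ≤ s % 2 ^ r ∧ s % 2 ^ r < c (dt s) + p (dt s)) :
    Function.Bijective
      (fun s : ℕ =>
        ((dt s, p (dt s) * (s / 2 ^ r) + s % 2 ^ r - c (dt s)) :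
          Fin I × ℕ)) := by
  have hR : 0 < 2 ^ r := Nat.pow_pos (by norm_num)
  have hmono : ∀ i j : Fin I, i < j → c i + p i ≤ c j := by
    intro i j hij
    rw [hc, hc]
    have h1 : ∑ k ∈ Finset.Iio i, p k + p i = ∑ k ∈ insert i (Finset.Iio i), p k := by
      rw [Finset.sum_insert (by simp)]; ring
    rw [h1]
    refine Finset.sum_le_sum_of_subset ?_
    intro k hk
    simp only [Finset.mem_insert, Finset.mem_Iio] at hk ⊢
    rcases hk with rfl | hk
    · exact hij
    · exact hk.trans hij
  have hcp : ∀ i : Fin I, c i + p i ≤ 2 ^ r := by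
    intro i
    rw [hc]
    have h1 : ∑ k ∈ Finset.Iio i, p k + p i = ∑ k ∈ insert i (Finset.Iio i), p k := by
      rw [Finset.sum_insert (by simp)]; ring
    rw [h1, ← hsum]
    exact Finset.sum_le_sum_of_subset (Finset.subset_univ _)
  have huniq : ∀ (i j : Fin I) (m : ℕ), c i ≤ m → m < c i + p i →
      c j ≤ m → m < c j + p j → i = j := by
    intro i j m h1 h2 h3 h4
    rcases lt_trichotomy i j with h | h | h
    · exact absurd (hmono i j h) (by omega)
    · exact h
    · exact absurd (hmono j i h) (by omega)
  rw [Function.bijective_iff_has_inverse]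
  refine ⟨fun x => 2 ^ r * (x.2 / p x.1) + c x.1 + x.2 % p x.1, ?_, ?_⟩
  · intro s
    simp only
    obtain ⟨hle, hlt⟩ := hdt s
    set i := dt s with hi
    set m := s % 2 ^ r - c i with hm
    have hmp : m < p i := by omega
    have hval : p i * (s / 2 ^ r) + s % 2 ^ r - c i = p i * (s / 2 ^ r) + m := by omega
    rw [hval]
    have hdiv : (p i * (s / 2 ^ r) + m) / p i = s / 2 ^ r := by
      rw [Nat.mul_add_div (hp i), Nat.div_eq_of_lt hmp, add_zero]
    have hmod : (p i * (s / 2 ^ r) + m) % p i = m := by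
      rw [Nat.mul_add_mod, Nat.mod_eq_of_lt hmp]
    rw [hdiv, hmod]
    have := Nat.div_add_mod s (2 ^ r)
    omega
  · rintro ⟨i, x⟩
    simp only
    set q := x / p i with hq
    set m := x % p i with hm
    have hmp : m < p i := Nat.mod_lt _ (hp i)
    have hx : p i * q + m = x := Nat.div_add_mod x (p i)
    have hg : 2 ^ r * q + c i + m = 2 ^ r * q + (c i + m) := by ring
    have hcm : c i + m < 2 ^ r := by have := hcp i; omega
    have hgd : (2 ^ r * q + c i + m) / 2 ^ r = q := by
      rw [hg, Nat.mul_add_div hR, Nat.div_eq_of_lt hcm, add_zero]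
    have hgm : (2 ^ r * q + c i + m) % 2 ^ r = c i + m := by
      rw [hg, Nat.mul_add_mod, Nat.mod_eq_of_lt hcm]
    obtain ⟨hle, hlt⟩ := hdt (2 ^ r * q + c i + m)
    rw [hgm] at hle hlt
    have hdi : dt (2 ^ r * q + c i + m) = i :=
      huniq _ i (c i + m) hle hlt (by omega) (by omega)
    rw [Prod.mk.injEq]
    constructor
    · exact hdi
    · rw [hdi, hgd, hgm]
      omega
end

section
/- For the ANS bijection d(s) = (s', x): s' equals the number of natural numbers n < s with d̃(n) = d̃(s); i.e., s' is the index of s within the ordered set d̃⁻¹(x). -/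
section Aux

variable {I r : ℕ} {p : Fin I → ℕ} {c : Fin I → ℕ} {dt : ℕ → Fin I}

lemma aux_Iic_sum (p : Fin I → ℕ) (i : Fin I) :
    ∑ k ∈ Finset.Iic i, p k = (∑ k ∈ Finset.Iio i, p k) + p i := by
  rw [← Finset.Iio_insert, Finset.sum_insert (by simp), Nat.add_comm]

lemma aux_disj (hc : ∀ i, c i = ∑ j ∈ Finset.Iio i, p j) {i j : Fin I}
    (hij : i < j) : c i + p i ≤ c j := by
  rw [hc, hc, ← aux_Iic_sum]
  refine Finset.sum_le_sum_of_subset ?_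
  intro k hk
  rw [Finset.mem_Iio]
  exact lt_of_le_of_lt (Finset.mem_Iic.mp hk) hij

lemma aux_iff (hc : ∀ i, c i = ∑ j ∈ Finset.Iio i, p j)
    (hdt : ∀ s, c (dt s) ≤ s % 2 ^ r ∧ s % 2 ^ r < c (dt s) + p (dt s))
    (n : ℕ) (i : Fin I) :
    dt n = i ↔ c i ≤ n % 2 ^ r ∧ n % 2 ^ r < c i + p i := by
  constructor
  · rintro rfl; exact hdt n
  · rintro ⟨h1, h2⟩
    obtain ⟨h3, h4⟩ := hdt n
    rcases lt_trichotomy (dt n) i with h | h | h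
    · exact absurd (aux_disj hc h) (by omega)
    · exact h
    · exact absurd (aux_disj hc h) (by omega)

lemma aux_le (hsum : ∑ i, p i = 2 ^ r)
    (hc : ∀ i, c i = ∑ j ∈ Finset.Iio i, p j) (i : Fin I) :
    c i + p i ≤ 2 ^ r := by
  rw [hc, ← hsum, ← aux_Iic_sum]
  exact Finset.sum_le_sum_of_subset (Finset.subset_univ _)

lemma aux_key (hsum : ∑ i, p i = 2 ^ r)
    (hc : ∀ i, c i = ∑ j ∈ Finset.Iio i, p j)
    (hdt : ∀ s, c (dt s) ≤ s % 2 ^ r ∧ s % 2 ^ r < c (dt s) + p (dt s))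
    (s : ℕ) (i : Fin I) :
    ((Finset.range s).filter (fun n => dt n = i)).card
      = p i * (s / 2 ^ r) + (min (s % 2 ^ r) (c i + p i) - min (s % 2 ^ r) (c i)) := by
  induction s with
  | zero => simp
  | succ s ih =>
    have hR : 0 < 2 ^ r := Nat.pow_pos (by norm_num)
    obtain ⟨q, t, hst, htR⟩ : ∃ q t, s = 2 ^ r * q + t ∧ t < 2 ^ r :=
      ⟨s / 2 ^ r, s % 2 ^ r, (Nat.div_add_mod s (2 ^ r)).symm, Nat.mod_lt _ hR⟩
    have hmods : s % 2 ^ r = t := by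
      rw [hst, Nat.mul_add_mod, Nat.mod_eq_of_lt htR]
    have hdivs : s / 2 ^ r = q := by
      rw [hst, Nat.mul_add_div hR, Nat.div_eq_of_lt htR, Nat.add_zero]
    have hle := aux_le hsum hc i
    have hiff := aux_iff hc hdt s i
    rw [hmods] at hiff
    rw [Finset.range_add_one, Finset.filter_insert]
    by_cases hcase : t + 1 < 2 ^ r
    · have hm1 : (s + 1) % 2 ^ r = t + 1 := by
        rw [show s + 1 = (t + 1) + 2 ^ r * q by omega, Nat.add_mul_mod_self_left,
          Nat.mod_eq_of_lt hcase]
      have hd1 : (s + 1) / 2 ^ r = q := by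
        rw [show s + 1 = (t + 1) + 2 ^ r * q by omega, Nat.add_mul_div_left _ _ hR,
          Nat.div_eq_of_lt hcase, Nat.zero_add]
      rw [hm1, hd1]
      by_cases h : dt s = i
      · rw [if_pos h, Finset.card_insert_of_notMem (by simp), ih, hmods, hdivs]
        set k := p i * q with hk
        have := hiff.mp h
        omega
      · rw [if_neg h, ih, hmods, hdivs]
        set k := p i * q with hk
        have : ¬ (c i ≤ t ∧ t < c i + p i) := fun hh => h (hiff.mpr hh)
        omega
    · have ht : t = 2 ^ r - 1 := by omega
      have hs1 : s + 1 = 2 ^ r * (q + 1) := by rw [Nat.mul_add, Nat.mul_one]; omega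
      have hm1 : (s + 1) % 2 ^ r = 0 := by rw [hs1, Nat.mul_mod_right]
      have hd1 : (s + 1) / 2 ^ r = q + 1 := by rw [hs1, Nat.mul_div_cancel_left _ hR]
      rw [hm1, hd1]
      have hmul : p i * (q + 1) = p i * q + p i := by ring
      rw [hmul]
      by_cases h : dt s = i
      · rw [if_pos h, Finset.card_insert_of_notMem (by simp), ih, hmods, hdivs]
        set k := p i * q with hk
        have := hiff.mp h
        omega
      · rw [if_neg h, ih, hmods, hdivs]
        set k := p i * q with hk
        have : ¬ (c i ≤ t ∧ t < c i + p i) := fun hh => h (hiff.mpr hh)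
        omega

end Aux

/-- For the ANS bijection `d(s) = (s', x)`, `s'` equals the number of natural
numbers `n < s` with `d̃(n) = d̃(s)`. -/
theorem stmt6 (I r : ℕ) (p : Fin I → ℕ) (hp : ∀ i, 1 ≤ p i)
    (hsum : ∑ i, p i = 2 ^ r)
    (c : Fin I → ℕ) (hc : ∀ i, c i = ∑ j ∈ Finset.Iio i, p j)
    (dt : ℕ → Fin I)
    (hdt : ∀ s, c (dt s) ≤ s % 2 ^ r ∧ s % 2 ^ r < c (dt s) + p (dt s))
    (s : ℕ) :
    p (dt s) * (s / 2 ^ r) + s % 2 ^ r - c (dt s)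
      = ((Finset.range s).filter (fun n => dt n = dt s)).card := by
  rw [aux_key hsum hc hdt s (dt s)]
  obtain ⟨h1, h2⟩ := hdt s
  set k := p (dt s) * (s / 2 ^ r) with hk
  omega
end

section
/- For the ANS symbol map, the ratio s'/s (where (s', x) = d(s)) converges to P(x) uniformly in the following sense: for all s ≥ 2^(r_s − r_t) with r_s − r_t > r, |s'/s − p_i/2^r| ≤ 2^r/s ≤ 2^(r − r_s + r_t), where i = d̃(s). -/
/-- Uniform convergence of `s'/s` to `P(x) = p_i/2^r`:
`|s'/s − p_i/2^r| ≤ 2^r/s ≤ 2^(r − r_s + r_t)` for `s ≥ 2^(r_s − r_t)`. -/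
theorem stmt7 (I r r_s r_t : ℕ) (p : Fin I → ℕ) (hp : ∀ i, 1 ≤ p i)
    (hsum : ∑ i, p i = 2 ^ r)
    (c : Fin I → ℕ) (hc : ∀ i, c i = ∑ j ∈ Finset.Iio i, p j)
    (hr : r + r_t < r_s)
    (s : ℕ) (hs : 2 ^ (r_s - r_t) ≤ s)
    (i : Fin I) (hi : c i ≤ s % 2 ^ r ∧ s % 2 ^ r < c i + p i)
    (s' : ℕ) (hs' : s' = p i * (s / 2 ^ r) + s % 2 ^ r - c i) :
    |(s' : ℝ) / s - (p i : ℝ) / 2 ^ r| ≤ (2 : ℝ) ^ r / s ∧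
      (2 : ℝ) ^ r / s ≤ (2 : ℝ) ^ r / 2 ^ (r_s - r_t) := by
  have hple : p i ≤ 2 ^ r := by
    rw [← hsum]
    exact Finset.single_le_sum (f := fun j => p j) (fun _ _ => Nat.zero_le _)
      (Finset.mem_univ i)
  set m := s % 2 ^ r with hm
  set q := s / 2 ^ r with hq
  have hspos : 0 < s := lt_of_lt_of_le (Nat.two_pow_pos _) hs
  have hsR : (0:ℝ) < s := by exact_mod_cast hspos
  have h2r : (0:ℝ) < 2 ^ r := by positivity
  have hsdecomp : (s:ℝ) = 2 ^ r * q + m := by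
    exact_mod_cast (Nat.div_add_mod s (2 ^ r)).symm
  have hs'R : (s':ℝ) = p i * q + m - c i := by
    rw [hs', Nat.cast_sub (by omega)]
    push_cast
    ring
  have hmltR : (m:ℝ) < 2 ^ r := by
    exact_mod_cast Nat.mod_lt _ (Nat.two_pow_pos _)
  have hcmR : (c i : ℝ) ≤ m := by exact_mod_cast hi.1
  have hmcpR : (m:ℝ) < c i + p i := by exact_mod_cast hi.2
  have hpleR : (p i : ℝ) ≤ 2 ^ r := by exact_mod_cast hple
  have hqnn : (0:ℝ) ≤ q := by positivity
  have hmnn : (0:ℝ) ≤ m := by positivity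
  constructor
  · have key : (s':ℝ) / s - (p i : ℝ) / 2 ^ r
        = ((2:ℝ) ^ r * ((m:ℝ) - c i) - (p i : ℝ) * m) / (2 ^ r * s) := by
      rw [hs'R]
      field_simp
      rw [hsdecomp]
      ring
    rw [key, abs_div, abs_of_pos (mul_pos h2r hsR)]
    rw [div_le_div_iff₀ (mul_pos h2r hsR) hsR]
    have hnum : |(2:ℝ) ^ r * ((m:ℝ) - c i) - (p i : ℝ) * m| ≤ 2 ^ r * 2 ^ r := by
      rw [abs_le]
      constructor <;> nlinarith
    exact le_of_le_of_eq (mul_le_mul_of_nonneg_right hnum hsR.le) (by ring)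
  · exact div_le_div_of_nonneg_left h2r.le (by positivity) (by exact_mod_cast hs)
end

section
/- The Benford distribution P(x) ∝ 1/x on leading-digit strings is the unique probability distribution on significands invariant under rescaling: if μ is a probability measure on [1, B) (significands base B) whose pushforward under multiplication by any constant c > 0 (followed by renormalizing the significand into [1,B)) equals μ, then μ has density proportional to 1/x, i.e., μ([1, a)) = log_B a for a ∈ [1, B). -/
open Real MeasureTheory Set


/-- The significand of `y` in base `B`: the unique `x ∈ [1, B)` with
`y = x · B^k`, `k ∈ ℤ` (for `y > 0`). -/
noncomputable def significand (B : ℝ) (y : ℝ) : ℝ :=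
  y / B ^ (⌊Real.logb B y⌋ : ℤ)

lemma sig_meas (B c : ℝ) : Measurable (fun x => significand B (c * x)) := by
  unfold significand
  apply Measurable.div
  · exact measurable_const.mul measurable_id
  · apply Measurable.comp (f := fun x => ⌊Real.logb B (c*x)⌋) (g := fun k : ℤ => (B:ℝ)^k)
    · exact measurable_from_top
    · apply Measurable.floor
      have : (fun x => Real.logb B (c*x)) = fun x => Real.log (c*x) / Real.log B := rfl
      rw [this]
      exact (Real.measurable_log.comp (measurable_const.mul measurable_id)).div_const _

lemma sig1 {B y : ℝ} (hB : 1 < B) (h1 : 1 ≤ y) (h2 : y < B) : significand B y = y := by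
  have hy : (0:ℝ) < y := lt_of_lt_of_le one_pos h1
  have hl0 : 0 ≤ Real.logb B y := Real.logb_nonneg hB h1
  have hl1 : Real.logb B y < 1 := by
    rw [Real.logb_lt_iff_lt_rpow hB hy, Real.rpow_one]; exact h2
  have : ⌊Real.logb B y⌋ = 0 := Int.floor_eq_zero_iff.2 ⟨hl0, hl1⟩
  simp [significand, this]

lemma sig2 {B y : ℝ} (hB : 1 < B) (h1 : B ≤ y) (h2 : y < B^2) : significand B y = y / B := by
  have hBpos : (0:ℝ) < B := lt_trans one_pos hB
  have hy : 0 < y := lt_of_lt_of_le hBpos h1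
  have hl0 : 1 ≤ Real.logb B y := by
    rw [Real.le_logb_iff_rpow_le hB hy, Real.rpow_one]; exact h1
  have hl1 : Real.logb B y < 2 := by
    rw [Real.logb_lt_iff_lt_rpow hB hy]
    rw [show ((2:ℝ)) = ((2:ℕ):ℝ) by norm_num, Real.rpow_natCast]; exact h2
  have hf : ⌊Real.logb B y⌋ = 1 := by
    rw [Int.floor_eq_iff]
    constructor
    · simpa using hl0
    · push_cast; linarith
  simp [significand, hf]

lemma preim_eq {B : ℝ} (hB : 1 < B) {s t : ℝ} (hs : 0 ≤ s) (hst : s ≤ t) (ht : t ≤ 1) :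
    ((fun x => significand B (B ^ s * x)) ⁻¹' Ico 1 (B ^ t)) ∩ Ico 1 B
      = Ico 1 (B ^ (t - s)) ∪ Ico (B ^ (1 - s)) B := by
  have rB : (0:ℝ) < B := lt_trans one_pos hB
  have ps : (0:ℝ) < B ^ s := rpow_pos_of_pos rB s
  have pt : (0:ℝ) < B ^ t := rpow_pos_of_pos rB t
  have one_le_s : (1:ℝ) ≤ B ^ s := Real.one_le_rpow hB.le hs
  have hts : B ^ (t - s) = B ^ t / B ^ s := Real.rpow_sub rB t s
  have h1s : B ^ (1 - s) = B / B ^ s := by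
    rw [Real.rpow_sub rB, Real.rpow_one]
  have hstB : B ^ t ≤ B := by
    calc B ^ t ≤ B ^ (1:ℝ) := Real.rpow_le_rpow_left_iff hB |>.2 ht
    _ = B := Real.rpow_one B
  ext x
  simp only [mem_inter_iff, mem_preimage, mem_Ico, mem_union]
  constructor
  · rintro ⟨⟨hs1, hs2⟩, hx1, hxB⟩
    by_cases hcase : x < B ^ (1 - s)
    · left
      have hlt : B ^ s * x < B := by
        rw [h1s, lt_div_iff₀' ps] at hcase; exact hcase
      have hge : 1 ≤ B ^ s * x := one_le_mul_of_one_le_of_one_le one_le_s hx1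
      rw [sig1 hB hge hlt] at hs2
      refine ⟨hx1, ?_⟩
      rw [hts, lt_div_iff₀' ps]; exact hs2
    · right; exact ⟨not_lt.1 hcase, hxB⟩
  · rintro (⟨hx1, hx2⟩ | ⟨hx1, hx2⟩)
    · have hxB : x < B := lt_of_lt_of_le hx2 (by
        rw [hts]
        calc B ^ t / B ^ s ≤ B ^ t := div_le_self pt.le one_le_s
        _ ≤ B := hstB)
      have hlt : B ^ s * x < B ^ t := by
        rw [hts, lt_div_iff₀' ps] at hx2; exact hx2
      have hltB : B ^ s * x < B := lt_of_lt_of_le hlt hstB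
      have hge : 1 ≤ B ^ s * x := one_le_mul_of_one_le_of_one_le one_le_s hx1
      rw [sig1 hB hge hltB]
      exact ⟨⟨hge, hlt⟩, hx1, hxB⟩
    · have hx1' : 1 ≤ x := le_trans (Real.one_le_rpow hB.le (by linarith)) hx1
      have hge : B ≤ B ^ s * x := by
        rw [h1s, div_le_iff₀' ps] at hx1; exact hx1
      have hlt2 : B ^ s * x < B ^ 2 := by
        have h1 : B ^ s ≤ B := by
          calc B ^ s ≤ B ^ (1:ℝ) := Real.rpow_le_rpow_left_iff hB |>.2 (le_trans hst ht)
          _ = B := Real.rpow_one B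
        nlinarith
      rw [sig2 hB hge hlt2]
      refine ⟨⟨?_, ?_⟩, hx1', hx2⟩
      · rw [le_div_iff₀ rB]; linarith
      · rw [div_lt_iff₀ rB]
        have h2 : B ^ s ≤ B ^ t := Real.rpow_le_rpow_left_iff hB |>.2 hst
        nlinarith

lemma cauchy01 (g : ℝ → ℝ) (mono : Monotone g) (g0 : g 0 = 0) (g1 : g 1 = 1)
    (hadd : ∀ s t : ℝ, 0 ≤ s → 0 ≤ t → s + t ≤ 1 → g (s + t) = g s + g t) :
    ∀ t : ℝ, 0 ≤ t → t ≤ 1 → g t = t := by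
  have hmul : ∀ n : ℕ, ∀ t : ℝ, 0 ≤ t → (n : ℝ) * t ≤ 1 → g ((n : ℝ) * t) = n * g t := by
    intro n
    induction n with
    | zero => intro t _ _; simpa using g0
    | succ n ih =>
      intro t ht hle
      have hnt : (n : ℝ) * t ≤ 1 := by
        have : (n:ℝ)*t ≤ (n+1:ℝ)*t := by nlinarith
        push_cast at hle ⊢; linarith
      have h1 : ((n+1 : ℕ) : ℝ) * t = (n:ℝ)*t + t := by push_cast; ring
      rw [h1, hadd _ _ (by positivity) ht (by push_cast at hle ⊢; linarith),
        ih t ht hnt]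
      push_cast; ring
  have hunit : ∀ n : ℕ, 0 < n → g (1 / n) = 1 / n := by
    intro n hn
    have hn' : (0:ℝ) < n := by exact_mod_cast hn
    have := hmul n (1/n) (by positivity) (by field_simp; exact le_rfl)
    rw [mul_one_div, div_self (ne_of_gt hn'), g1] at this
    field_simp at this ⊢
    linarith
  have hq : ∀ q : ℚ, 0 ≤ q → (q : ℝ) ≤ 1 → g q = q := by
    intro q hq0 hq1
    set m : ℕ := q.num.toNat with hm
    have hnum : (q.num : ℝ) = (m : ℝ) := by
      rw [hm]; exact_mod_cast (Int.toNat_of_nonneg (Rat.num_nonneg.2 hq0)).symm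
    have hden : (0:ℝ) < (q.den : ℝ) := by exact_mod_cast q.pos
    have hcast : (q : ℝ) = (m : ℝ) * (1 / q.den) := by
      rw [Rat.cast_def, hnum]; ring
    have hle : (m : ℝ) * (1 / q.den) ≤ 1 := by rw [← hcast]; exact hq1
    rw [hcast, hmul m (1/q.den) (by positivity) hle, hunit q.den q.pos, ← hcast]
  intro t ht0 ht1
  by_contra hne
  rcases lt_or_gt_of_ne hne with h | h
  · obtain ⟨q, hq1, hq2⟩ := exists_rat_btwn h
    have hq0 : (0:ℚ) ≤ q := by
      have : (0:ℝ) ≤ g t := g0 ▸ mono ht0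
      exact_mod_cast le_of_lt (lt_of_le_of_lt this hq1)
    have : g q = q := hq q hq0 (le_of_lt (lt_of_lt_of_le hq2 ht1))
    have : (q:ℝ) ≤ g t := this ▸ mono (le_of_lt hq2)
    linarith
  · obtain ⟨q, hq1, hq2⟩ := exists_rat_btwn h
    have hgt1 : g t ≤ 1 := g1 ▸ mono ht1
    have hq0 : (0:ℚ) ≤ q := by exact_mod_cast le_of_lt (lt_of_le_of_lt ht0 hq1)
    have : g q = q := hq q hq0 (le_of_lt (lt_of_lt_of_le hq2 hgt1))
    have : g t ≤ (q:ℝ) := this ▸ mono (le_of_lt hq1)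
    linarith

/-- The Benford distribution is the unique scale-invariant distribution on
significands: if a probability measure on `[1, B)` is invariant under
`x ↦ significand (c·x)` for every `c > 0`, then `μ([1, a)) = log_B a`. -/
theorem stmt16 (B : ℝ) (hB : 1 < B) (μ : MeasureTheory.Measure ℝ)
    [MeasureTheory.IsProbabilityMeasure μ]
    (hsupp : μ (Set.Ico 1 B) = 1)
    (hinv : ∀ c : ℝ, 0 < c →
      μ.map (fun x => significand B (c * x)) = μ) :
    ∀ a : ℝ, 1 ≤ a → a < B →
      (μ (Set.Ico 1 a)).toReal = Real.logb B a := by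
  have rB : (0:ℝ) < B := lt_trans one_pos hB
  -- the complement of [1, B) is null
  have hnull : μ (Set.Ico (1:ℝ) B)ᶜ = 0 := by
    rw [measure_compl measurableSet_Ico (measure_ne_top μ _), measure_univ, hsupp]
    simp
  have hinter : ∀ A : Set ℝ, μ A = μ (A ∩ Set.Ico 1 B) := by
    intro A
    refine le_antisymm ?_ (measure_mono Set.inter_subset_left)
    calc μ A ≤ μ (A ∩ Set.Ico 1 B) + μ (A \ Set.Ico 1 B) :=
          le_of_eq (measure_inter_add_diff A measurableSet_Ico).symm
      _ ≤ μ (A ∩ Set.Ico 1 B) + μ (Set.Ico (1:ℝ) B)ᶜ := by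
          gcongr; exact fun x hx => hx.2
      _ = μ (A ∩ Set.Ico 1 B) := by rw [hnull, add_zero]
  -- the key measure identity
  have key : ∀ s t : ℝ, 0 ≤ s → s ≤ t → t ≤ 1 →
      μ (Set.Ico 1 (B ^ t)) = μ (Set.Ico 1 (B ^ (t - s))) + μ (Set.Ico (B ^ (1 - s)) B) := by
    intro s t hs hst ht
    have hmap := hinv (B ^ s) (rpow_pos_of_pos rB s)
    calc μ (Set.Ico 1 (B ^ t))
        = (μ.map (fun x => significand B (B ^ s * x))) (Set.Ico 1 (B ^ t)) := by rw [hmap]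
      _ = μ ((fun x => significand B (B ^ s * x)) ⁻¹' Set.Ico 1 (B ^ t)) :=
          Measure.map_apply (sig_meas B _) measurableSet_Ico
      _ = μ (((fun x => significand B (B ^ s * x)) ⁻¹' Set.Ico 1 (B ^ t)) ∩ Set.Ico 1 B) :=
          hinter _
      _ = μ (Set.Ico 1 (B ^ (t - s)) ∪ Set.Ico (B ^ (1 - s)) B) := by
          rw [preim_eq hB hs hst ht]
      _ = μ (Set.Ico 1 (B ^ (t - s))) + μ (Set.Ico (B ^ (1 - s)) B) := by
          apply measure_union _ measurableSet_Ico
          apply Set.disjoint_left.2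
          rintro x ⟨_, hx2⟩ ⟨hx3, _⟩
          have : B ^ (t - s) ≤ B ^ (1 - s) :=
            Real.rpow_le_rpow_left_iff hB |>.2 (by linarith)
          linarith
  -- define g
  set g : ℝ → ℝ := fun t => (μ (Set.Ico 1 (B ^ t))).toReal with hg
  have gmono : Monotone g := by
    intro s t hst
    apply ENNReal.toReal_mono (measure_ne_top μ _)
    exact measure_mono (Set.Ico_subset_Ico le_rfl
      (Real.rpow_le_rpow_left_iff hB |>.2 hst))
  have g0 : g 0 = 0 := by
    simp [hg, Real.rpow_zero]
  have g1 : g 1 = 1 := by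
    simp [hg, Real.rpow_one, hsupp]
  have gadd : ∀ s t : ℝ, 0 ≤ s → 0 ≤ t → s + t ≤ 1 → g (s + t) = g s + g t := by
    intro s t hs ht hst1
    have h1 := key s (s + t) hs (by linarith) hst1
    have h2 := key s s hs le_rfl (by linarith)
    simp only [sub_self, Real.rpow_zero, Set.Ico_self, measure_empty, zero_add] at h2
    have heq : μ (Set.Ico 1 (B ^ (s + t))) = μ (Set.Ico 1 (B ^ t)) + μ (Set.Ico 1 (B ^ s)) := by
      rw [h1, ← h2]; ring_nf
    have := congrArg ENNReal.toReal heq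
    rw [ENNReal.toReal_add (measure_ne_top μ _) (measure_ne_top μ _)] at this
    rw [hg]; linarith [this]
  have gid := cauchy01 g gmono g0 g1 gadd
  intro a ha1 haB
  have hapos : (0:ℝ) < a := lt_of_lt_of_le one_pos ha1
  have ht0 : 0 ≤ Real.logb B a := Real.logb_nonneg hB ha1
  have ht1 : Real.logb B a ≤ 1 := by
    rw [Real.logb_le_iff_le_rpow hB hapos, Real.rpow_one]; exact haB.le
  have hBa : B ^ Real.logb B a = a := Real.rpow_logb rB (ne_of_gt hB) hapos
  have := gid (Real.logb B a) ht0 ht1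
  rw [hg] at this
  simpa [hBa] using this
end
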